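/- For β ∈ [0,2] and M ∈ 𝔐^β, the β-inversion is an involution: (M^β)^β = M. -/

import Mathlib

open MeasureTheory ENNReal Filter Topology Set

noncomputable section

abbrev Rd (d : ℕ) := EuclideanSpace ℝ (Fin d)

/-- The spherical inversion map `x ↦ x / |x|²` (sending `0` to `0`). -/
def sphInv {d : ℕ} (x : Rd d) : Rd d := (‖x‖ ^ 2)⁻¹ • x

/-- The β-inversion of a measure `M`:
`M^β(A) = ∫ 1_A(x/|x|²) |x|^{2+β} M(dx)`. -/
def betaInv {d : ℕ} (β : ℝ) (M : Measure (Rd d)) : Measure (Rd d) :=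
  Measure.map sphInv (M.withDensity fun x => ENNReal.ofReal (‖x‖ ^ (2 + β)))

/-- `M ∈ 𝔐^β`: `M({0}) = 0` and `∫ (|x|² ∧ |x|^β) M(dx) < ∞`. -/
def MemM {d : ℕ} (β : ℝ) (M : Measure (Rd d)) : Prop :=
  M {0} = 0 ∧ ∫⁻ x, ENNReal.ofReal (min (‖x‖ ^ (2 : ℝ)) (‖x‖ ^ β)) ∂M < ⊤

/-! The density `|x|^{2+β}` and its pull-back `|x|^{-(2+β)}` under the inversion multiply to `1`
away from the origin, and the inversion is a measurable involution; so applying the β-inversion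
twice multiplies `M` by the density `1` off the `M`-null set `{0}` and maps it by the identity. -/

section ChangeOfVariables

variable {α β : Type*} [MeasurableSpace α] [MeasurableSpace β]

theorem withDensity_map (ν : Measure α) {g : α → β} (hg : Measurable g) {f : β → ℝ≥0∞}
    (hf : Measurable f) : (ν.map g).withDensity f = (ν.withDensity (f ∘ g)).map g := by
  ext s hs
  rw [withDensity_apply _ hs, setLIntegral_map hs hf hg, Measure.map_apply hg hs,
    withDensity_apply _ (hg hs)]
  rfl

theorem map_withDensity_map_withDensity_of_involutive {ν : Measure α} {g : α → α}
    (hg : Measurable g) (hg_inv : Function.Involutive g) {f : α → ℝ≥0∞} (hf : Measurable f)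
    (hfg : ∀ᵐ x ∂ν, f x * f (g x) = 1) :
    (((ν.withDensity f).map g).withDensity f).map g = ν := by
  rw [withDensity_map _ hg hf, Measure.map_map hg hg, hg_inv.comp_self, Measure.map_id,
    ← withDensity_mul _ hf (hf.comp hg)]
  exact (withDensity_congr_ae hfg).trans withDensity_one

end ChangeOfVariables

theorem measurable_sphInv {d : ℕ} : Measurable (sphInv (d := d)) :=
  (measurable_norm.pow_const 2).inv.smul measurable_id

theorem norm_sphInv {d : ℕ} (x : Rd d) : ‖sphInv x‖ = ‖x‖⁻¹ := by
  rcases eq_or_ne x 0 with rfl | hx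
  · simp [sphInv]
  · have h : ‖x‖ ≠ 0 := norm_ne_zero_iff.mpr hx
    rw [sphInv, norm_smul, norm_inv, norm_pow, norm_norm]
    field_simp

theorem sphInv_involutive {d : ℕ} : Function.Involutive (sphInv (d := d)) := by
  intro x
  rcases eq_or_ne x 0 with rfl | hx
  · simp [sphInv]
  · have h : ‖x‖ ^ 2 ≠ 0 := pow_ne_zero 2 (norm_ne_zero_iff.mpr hx)
    rw [sphInv, norm_sphInv, sphInv, smul_smul, inv_pow, inv_inv, mul_inv_cancel₀ h, one_smul]

theorem ofReal_norm_rpow_mul_norm_sphInv_rpow {d : ℕ} (γ : ℝ) {x : Rd d} (hx : x ≠ 0) :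
    ENNReal.ofReal (‖x‖ ^ γ) * ENNReal.ofReal (‖sphInv x‖ ^ γ) = 1 := by
  have h : ‖x‖ ≠ 0 := norm_ne_zero_iff.mpr hx
  rw [norm_sphInv, ← ENNReal.ofReal_mul (by positivity),
    ← Real.mul_rpow (norm_nonneg x) (inv_nonneg.mpr (norm_nonneg x)), mul_inv_cancel₀ h,
    Real.one_rpow, ENNReal.ofReal_one]

theorem stmt1_general {d : ℕ} (β : ℝ)
    (M : Measure (Rd d)) (hM : MemM β M) :
    betaInv β (betaInv β M) = M := by
  have hM_ae_ne_zero : ∀ᵐ x ∂M, x ≠ 0 := compl_mem_ae_iff.mpr hM.1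
  refine map_withDensity_map_withDensity_of_involutive measurable_sphInv sphInv_involutive
    (measurable_norm.pow_const _).ennreal_ofReal ?_
  filter_upwards [hM_ae_ne_zero] with x hx
  exact ofReal_norm_rpow_mul_norm_sphInv_rpow (2 + β) hx

theorem stmt1 {d : ℕ} (β : ℝ) (hβ : β ∈ Set.Icc (0 : ℝ) 2)
    (M : Measure (Rd d)) (hM : MemM β M) :
    betaInv β (betaInv β M) = M :=
  stmt1_general β M hM
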